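/- Let A be an algebra in the variety R. Then for all x,y,z,t in A: x R_y L_z L_t = y V_{x,z} L_t - x R_y V_{t,z}, i.e., t(z(xy)) = t((xy)z) - (t(xy))z. -/
import Mathlib


theorem stmt {F A : Type*} [Field F] [NonUnitalNonAssocRing A] [Module F A]
    [SMulCommClass F A A] [IsScalarTower F A A]
    (h1 : ∀ a b c : A, (a * b - b * a) * c - c * (a * b - b * a) = 0)
    (h2 : ∀ a b : A, (a * b) * a = 0)
    (h3 : ∀ a b c d : A, (a * b) * (c * d) = 0) :
    ∀ x y z t : A, t * (z * (x * y)) = t * ((x * y) * z) - (t * (x * y)) * z := by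
  intro x y z t
  set w := x * y with hw
  -- linearized h2 : (a*b)*c + (c*b)*a = 0
  have lin : ∀ a b c : A, (a * b) * c + (c * b) * a = 0 := by
    intro a b c
    have h := h2 (a + c) b
    simp only [add_mul, mul_add, h2, zero_add, add_zero] at h
    rw [add_comm] at h
    exact h
  -- E2 : (t*w)*z + (z*w)*t = 0
  have E2 := lin t w z
  -- E3 : (w*z)*t = 0
  have E3 : (w * z) * t = 0 := by
    have h := lin w z t
    rw [hw, h3 t z x y, add_zero] at h
    exact h
  -- E1 : centrality of commutator
  have E1 : t * (z * w) - t * (w * z) = (z * w) * t - (w * z) * t := by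
    have h := h1 z w t
    rw [sub_mul, mul_sub] at h
    have := sub_eq_zero.mp h
    exact this.symm
  have hzwt : (z * w) * t = -((t * w) * z) := by
    exact eq_neg_of_add_eq_zero_right E2
  have := sub_eq_iff_eq_add.mp E1
  rw [E3, sub_zero, hzwt] at this
  rw [this]
  abel
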